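/- Let I, d, K, J be positive integers, let X ⊆ {0,1}^I × ℝ^d be nonempty, let g : {0,1}^I × ℝ^d → ℝ, let Q : {0,1}^I × {1,…,K} → ℝ, let λ ∈ [0,1] and risk level α ∈ (0,1). Let ξ¹,…,ξ^K ∈ ℝ^J and μ : {0,1}^I → ℝ^J, S : {0,1}^I → ℝ^{J×J}; for x ∈ {0,1}^I set P₂(x) = {p ∈ ℝ^K : p ≥ 0, Σ_k p_k = 1, Σ_k p_k ξᵏ = μ(x), Σ_k p_k (ξᵏ − μ(x))(ξᵏ − μ(x))ᵀ = S(x)} and Q(p) = {q ∈ ℝ^K : 0 ≤ q_k ≤ p_k λ/(1−α), Σ_k q_k = λ}. Assume that for every x in the projection X̂ there exist p ∈ P₂(x) and q ∈ Q(p). Then inf over (x,y) ∈ X of [ g(x,y) + sup { (1−λ) Σ_k p_k Q(x,k) + Σ_k q_k Q(x,k) : p ∈ P₂(x), q ∈ Q(p) } ] equals inf of g(x,y) − λ θ + s + uᵀ μ(x) + S(x) • Y over all (x,y) ∈ X, θ ∈ ℝ, s ∈ ℝ, u ∈ ℝ^J, Y ∈ ℝ^{J×J}, π ∈ ℝ^K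 with π ≥ 0, subject to: s + uᵀ ξᵏ + ((ξᵏ − μ(x))(ξᵏ − μ(x))ᵀ) • Y − (λ/(1−α)) π_k ≥ (1−λ) Q(x,k) for all k, and π_k − θ ≥ Q(x,k) for all k. -/
import Mathlib

open scoped BigOperators

/-- Frobenius inner product `A • B = trace(Aᵀ B) = Σᵢⱼ Aᵢⱼ Bᵢⱼ`. -/
def frob {n : Type*} [Fintype n] (A B : Matrix n n ℝ) : ℝ := ∑ i, ∑ j, A i j * B i j

/-- Type 2 (exact moment-matching) ambiguity set with finite support. -/
def Type2Set (K J : ℕ) (ξ : Fin K → Fin J → ℝ) (μ : Fin J → ℝ)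
    (S : Matrix (Fin J) (Fin J) ℝ) : Set (Fin K → ℝ) :=
  {p | (∀ k, 0 ≤ p k) ∧ (∑ k, p k) = 1 ∧ (∀ j, ∑ k, p k * ξ k j = μ j) ∧
       ∀ i j, (∑ k, p k * ((ξ k i - μ i) * (ξ k j - μ j))) = S i j}

/-- CVaR-multiplier set `Q(p) = {q : 0 ≤ q_k ≤ p_k λ/(1−α), Σ_k q_k = λ}`. -/
def CVaRSet (K : ℕ) (lam alp : ℝ) (p : Fin K → ℝ) : Set (Fin K → ℝ) :=
  {q | (∀ k, 0 ≤ q k ∧ q k ≤ p k * (lam / (1 - alp))) ∧ (∑ k, q k) = lam}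

section ConeLP
set_option linter.unusedSectionVars false

variable {E : Type} [NormedAddCommGroup E] [NormedSpace ℝ E] [FiniteDimensional ℝ E]

def myCone {ι : Type} [Fintype ι] (v : ι → E) : Set E :=
  {x | ∃ l : ι → ℝ, (∀ i, 0 ≤ l i) ∧ x = ∑ i, l i • v i}

lemma myCone_isClosed_aux (n : ℕ) :
    ∀ (ι : Type) (_ : Fintype ι) (_ : DecidableEq ι), Fintype.card ι ≤ n →
      ∀ (v : ι → E), IsClosed (myCone v) := by
  induction n with
  | zero =>
    intro ι _ _ hcard v
    have : IsEmpty ι := Fintype.card_eq_zero_iff.mp (Nat.le_zero.mp hcard)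
    have h : myCone v = {(0 : E)} := by
      ext x
      constructor
      · rintro ⟨l, _, rfl⟩; simp
      · rintro rfl; exact ⟨0, fun i => le_refl 0, by simp⟩
    rw [h]; exact isClosed_singleton
  | succ n ih =>
    intro ι _ _ hcard v
    by_cases hli : ∀ l : ι → ℝ, ∑ i, l i • v i = 0 → l = 0
    · -- independent case
      let T : (ι → ℝ) →ₗ[ℝ] E :=
        { toFun := fun l => ∑ i, l i • v i
          map_add' := by intro a b; simp [add_smul, Finset.sum_add_distrib]
          map_smul' := by intro c a; simp [smul_smul, Finset.smul_sum] }
      have hker : LinearMap.ker T = ⊥ := by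
        rw [LinearMap.ker_eq_bot']
        intro l hl
        exact hli l hl
      have hT := LinearMap.isClosedEmbedding_of_injective (f := T) hker
      have himg : myCone v = T '' {l : ι → ℝ | ∀ i, 0 ≤ l i} := by
        ext x
        constructor
        · rintro ⟨l, hl, rfl⟩; exact ⟨l, hl, rfl⟩
        · rintro ⟨l, hl, rfl⟩; exact ⟨l, hl, rfl⟩
      rw [himg]
      refine hT.isClosedMap _ ?_
      have : {l : ι → ℝ | ∀ i, 0 ≤ l i} = ⋂ i, {l : ι → ℝ | 0 ≤ l i} := by
        ext l; simp [Set.mem_iInter]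
      rw [this]
      exact isClosed_iInter fun i => isClosed_le continuous_const (continuous_apply i)
    · -- dependent case
      push_neg at hli
      obtain ⟨a, ha0, hane⟩ := hli
      -- get b with sum zero and some positive coordinate
      obtain ⟨j₀, hj₀⟩ : ∃ j, a j ≠ 0 := by
        by_contra h; push_neg at h; exact hane (funext fun i => h i)
      obtain ⟨b, hb0, j₁, hj₁⟩ : ∃ b : ι → ℝ, ∑ i, b i • v i = 0 ∧ ∃ j, 0 < b j := by
        rcases lt_or_gt_of_ne hj₀ with h | h
        · exact ⟨-a, by simp [ha0], j₀, by simpa using h⟩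
        · exact ⟨a, ha0, j₀, h⟩
      have hunion : myCone v = ⋃ j : ι, myCone (fun i : {i // i ≠ j} => v i) := by
        ext x
        constructor
        · rintro ⟨l, hl, rfl⟩
          set F := Finset.univ.filter (fun j => 0 < b j) with hF
          have hFne : F.Nonempty := ⟨j₁, by simp [hF, hj₁]⟩
          obtain ⟨js, hjsF, hmin⟩ := F.exists_min_image (fun j => l j / b j) hFne
          have hbjs : 0 < b js := by simpa [hF] using hjsF
          set t := l js / b js with htdef
          have ht : 0 ≤ t := div_nonneg (hl js) hbjs.le
          set l' : ι → ℝ := fun i => l i - t * b i with hl'def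
          have hl'0 : ∀ i, 0 ≤ l' i := by
            intro i
            by_cases hbi : 0 < b i
            · have := hmin i (by simp [hF, hbi])
              have : t * b i ≤ l i := by
                rw [htdef] at this ⊢
                calc (l js / b js) * b i ≤ (l i / b i) * b i := by
                      exact mul_le_mul_of_nonneg_right this hbi.le
                  _ = l i := div_mul_cancel₀ _ hbi.ne'
              simpa [hl'def] using sub_nonneg.mpr this
            · have h1 : t * b i ≤ 0 :=
                mul_nonpos_of_nonneg_of_nonpos ht (le_of_not_gt hbi)
              have h2 : 0 ≤ l i - t * b i := by linarith [hl i]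
              simpa [hl'def] using h2
          have hl'js : l' js = 0 := by
            simp [hl'def, htdef, div_mul_cancel₀ _ hbjs.ne']
          have hsum : ∑ i, l' i • v i = ∑ i, l i • v i := by
            simp only [hl'def, sub_smul, Finset.sum_sub_distrib, mul_smul]
            rw [← Finset.smul_sum, hb0, smul_zero, sub_zero]
          refine Set.mem_iUnion.mpr ⟨js, ⟨fun i => l' i, fun i => hl'0 i, ?_⟩⟩
          rw [← hsum]
          rw [← Finset.sum_erase_add _ _ (Finset.mem_univ js), hl'js, zero_smul, add_zero]
          rw [Finset.sum_subtype (s := Finset.univ.erase js) (p := fun i => i ≠ js) (fun i => by simp [Finset.mem_erase])]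
        · rintro hx
          obtain ⟨j, lx, hlx, rfl⟩ := Set.mem_iUnion.mp hx
          classical
          refine ⟨fun i => if h : i = j then 0 else lx ⟨i, h⟩, fun i => ?_, ?_⟩
          · by_cases h : i = j <;> simp [h, hlx]
          · rw [← Finset.sum_erase_add _ _ (Finset.mem_univ j)]
            beta_reduce
            rw [dif_pos rfl, zero_smul, add_zero,
              Finset.sum_subtype (s := Finset.univ.erase j) (p := fun i => i ≠ j) (fun i => by simp [Finset.mem_erase])]
            exact (Finset.sum_congr rfl (fun i _ => by rw [dif_neg i.2])).symm
      rw [hunion]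
      apply isClosed_iUnion_of_finite
      intro j
      have hcard' : Fintype.card {i // i ≠ j} ≤ n := by
        have h1 : Fintype.card {i // i ≠ j} < Fintype.card ι := by
          apply Fintype.card_subtype_lt (x := j); simp
        omega
      exact ih {i // i ≠ j} _ (fun a b => inferInstance) hcard' _

lemma myCone_isClosed {ι : Type} [Fintype ι] [DecidableEq ι] (v : ι → E) :
    IsClosed (myCone v) :=
  myCone_isClosed_aux (Fintype.card ι) ι ‹_› ‹_› le_rfl v

lemma myCone_convex {ι : Type} [Fintype ι] (v : ι → E) : Convex ℝ (myCone v) := by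
  rintro x ⟨l1, hl1, rfl⟩ y ⟨l2, hl2, rfl⟩ t s ht hs hts
  refine ⟨fun i => t * l1 i + s * l2 i,
    fun i => add_nonneg (mul_nonneg ht (hl1 i)) (mul_nonneg hs (hl2 i)), ?_⟩
  rw [Finset.smul_sum, Finset.smul_sum, ← Finset.sum_add_distrib]
  exact Finset.sum_congr rfl fun i _ => by rw [add_smul, smul_smul, smul_smul]

lemma lp_duality {ι κ : Type} [Fintype ι] [Fintype κ] [DecidableEq ι] [DecidableEq κ]
    (A : ι → κ → ℝ) (b : κ → ℝ) (c : ι → ℝ)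
    (w₀ : ι → ℝ) (hw₀0 : ∀ j, 0 ≤ w₀ j) (hw₀A : ∀ r, ∑ j, w₀ j * A j r = b r)
    (V : ℝ)
    (hub : ∀ w : ι → ℝ, (∀ j, 0 ≤ w j) → (∀ r, ∑ j, w j * A j r = b r) →
      ∑ j, w j * c j ≤ V)
    (ε : ℝ) (hε : 0 < ε) :
    ∃ y : κ → ℝ, (∀ j, c j ≤ ∑ r, A j r * y r) ∧ ∑ r, b r * y r < V + ε := by
  classical
  set gen : ι → ((κ → ℝ) × ℝ) := fun j => (A j, c j) with hgen_def
  have hmem : ∀ l : ι → ℝ,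
      (∑ j, l j • gen j) = ((fun r => ∑ j, l j * A j r), ∑ j, l j * c j) := by
    intro l
    refine Prod.ext ?_ ?_
    · rw [Prod.fst_sum]
      funext r
      rw [Finset.sum_apply]
      exact Finset.sum_congr rfl fun j _ => rfl
    · rw [Prod.snd_sum]
      exact Finset.sum_congr rfl fun j _ => rfl
  have hnotmem : ((b, V + ε) : (κ → ℝ) × ℝ) ∉ myCone gen := by
    rintro ⟨l, hl, heq⟩
    rw [hmem l] at heq
    have h1 : (fun r => ∑ j, l j * A j r) = b := (Prod.mk.injEq _ _ _ _ ▸ heq).1.symm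
    have h2 : V + ε = ∑ j, l j * c j := (Prod.mk.injEq _ _ _ _ ▸ heq).2
    have := hub l hl (fun r => congrFun h1 r)
    linarith
  obtain ⟨f, u, hfs, hfx⟩ :=
    geometric_hahn_banach_closed_point (myCone_convex gen) (myCone_isClosed gen) hnotmem
  have h0mem : (0 : (κ → ℝ) × ℝ) ∈ myCone gen := ⟨0, fun i => le_refl 0, by simp⟩
  have hu0 : 0 < u := by have := hfs 0 h0mem; simpa using this
  have hnonpos : ∀ x ∈ myCone gen, f x ≤ 0 := by
    rintro x ⟨l, hl, rfl⟩
    by_contra hpos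
    push_neg at hpos
    set d := (u + 1) / f (∑ j, l j • gen j) with hd
    have hd0 : 0 ≤ d := div_nonneg (by linarith) hpos.le
    have hmem2 : d • (∑ j, l j • gen j) ∈ myCone gen := by
      refine ⟨fun i => d * l i, fun i => mul_nonneg hd0 (hl i), ?_⟩
      rw [Finset.smul_sum]
      exact Finset.sum_congr rfl fun i _ => by rw [smul_smul]
    have := hfs _ hmem2
    rw [map_smul, smul_eq_mul, hd, div_mul_cancel₀ _ (ne_of_gt hpos)] at this
    linarith
  set y0 : κ → ℝ := fun r => f ((Pi.single r 1 : κ → ℝ), 0) with hy0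
  set t0 : ℝ := f ((0 : κ → ℝ), 1) with ht0def
  have hrep : ∀ (w : κ → ℝ) (s : ℝ), f (w, s) = (∑ r, w r * y0 r) + s * t0 := by
    intro w s
    have hdecomp : ((w, s) : (κ → ℝ) × ℝ)
        = (∑ r, w r • (((Pi.single r 1 : κ → ℝ), (0:ℝ)))) + s • ((0 : κ → ℝ), (1:ℝ)) := by
      refine Prod.ext ?_ ?_
      · rw [Prod.fst_add, Prod.fst_sum]
        simp only [Prod.smul_fst, smul_zero, Prod.fst]
        funext r'
        rw [Pi.add_apply, Finset.sum_apply]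
        simp [Pi.single_apply]
      · rw [Prod.snd_add, Prod.snd_sum]
        simp
    rw [hdecomp, map_add, map_sum, map_smul, smul_eq_mul]
    congr 1
    exact Finset.sum_congr rfl fun r _ => by rw [map_smul, smul_eq_mul]
  have hgenj : ∀ j, (∑ r, A j r * y0 r) + c j * t0 ≤ 0 := by
    intro j
    have hmemj : gen j ∈ myCone gen := by
      refine ⟨Pi.single j 1, fun i => by by_cases h : i = j <;> simp [Pi.single_apply, h], ?_⟩
      rw [Finset.sum_eq_single_of_mem j (Finset.mem_univ j)]
      · simp
      · intro i _ hij; simp [Pi.single_apply, hij]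
    have := hnonpos _ hmemj
    rw [hgen_def] at this
    rw [← hrep]
    exact this
  have hfeas_le : (∑ r, b r * y0 r) + (∑ j, w₀ j * c j) * t0 ≤ 0 := by
    have hmemw : ((b, ∑ j, w₀ j * c j) : (κ → ℝ) × ℝ) ∈ myCone gen := by
      refine ⟨w₀, hw₀0, ?_⟩
      rw [hmem w₀]
      refine Prod.ext ?_ rfl
      funext r
      exact (hw₀A r).symm
    have := hnonpos _ hmemw
    rw [hrep] at this
    exact this
  have hxpos : 0 < (∑ r, b r * y0 r) + (V + ε) * t0 := by
    have := hrep b (V + ε)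
    rw [this] at hfx
    linarith
  have hobj0 : ∑ j, w₀ j * c j ≤ V := hub w₀ hw₀0 hw₀A
  have ht0 : 0 < t0 := by nlinarith
  refine ⟨fun r => -(y0 r) / t0, ?_, ?_⟩
  · intro j
    have hsum : -(∑ r, A j r * y0 r) / t0 = ∑ r, A j r * (-(y0 r) / t0) := by
      rw [← Finset.sum_neg_distrib, Finset.sum_div]
      exact Finset.sum_congr rfl fun r _ => by ring
    rw [← hsum, le_div_iff₀ ht0]
    nlinarith [hgenj j]
  · have hsum : -(∑ r, b r * y0 r) / t0 = ∑ r, b r * (-(y0 r) / t0) := by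
      rw [← Finset.sum_neg_distrib, Finset.sum_div]
      exact Finset.sum_congr rfl fun r _ => by ring
    rw [← hsum, div_lt_iff₀ ht0]
    nlinarith

end ConeLP

lemma weak_dual (K J : ℕ) (ξ : Fin K → Fin J → ℝ) (Qz : Fin K → ℝ) (μz : Fin J → ℝ)
    (Sz : Matrix (Fin J) (Fin J) ℝ) (lam alp : ℝ)
    (θ s : ℝ) (u : Fin J → ℝ) (Y : Matrix (Fin J) (Fin J) ℝ) (pv : Fin K → ℝ)
    (hpv : ∀ k, 0 ≤ pv k)
    (hc1 : ∀ k, (1 - lam) * Qz k ≤ s + (∑ j, u j * ξ k j) +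
      frob (Matrix.vecMulVec (fun j => ξ k j - μz j) (fun j => ξ k j - μz j)) Y
      - (lam / (1 - alp)) * pv k)
    (hc2 : ∀ k, Qz k ≤ pv k - θ)
    (p : Fin K → ℝ) (hp : p ∈ Type2Set K J ξ μz Sz)
    (q : Fin K → ℝ) (hq : q ∈ CVaRSet K lam alp p) :
    (1 - lam) * (∑ k, p k * Qz k) + ∑ k, q k * Qz k ≤
      -(lam * θ) + s + (∑ j, u j * μz j) + frob Sz Y := by
  obtain ⟨hp0, hp1, hpμ, hpS⟩ := hp
  obtain ⟨hq01, hqsum⟩ := hq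
  set cL := lam / (1 - alp) with hcL
  -- rewrite frob of vecMulVec
  have hfrobM : ∀ k, frob (Matrix.vecMulVec (fun j => ξ k j - μz j) (fun j => ξ k j - μz j)) Y
      = ∑ i, ∑ j, (ξ k i - μz i) * (ξ k j - μz j) * Y i j := by
    intro k
    unfold frob
    exact Finset.sum_congr rfl fun i _ => Finset.sum_congr rfl fun j _ => by
      rw [Matrix.vecMulVec_apply]
  have key1 : ∑ k, p k * ((1 - lam) * Qz k) ≤
      ∑ k, p k * (s + (∑ j, u j * ξ k j) +
        (∑ i, ∑ j, (ξ k i - μz i) * (ξ k j - μz j) * Y i j) - cL * pv k) := by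
    refine Finset.sum_le_sum fun k _ => mul_le_mul_of_nonneg_left ?_ (hp0 k)
    have := hc1 k
    rw [hfrobM k] at this
    exact this
  have e1 : ∑ k, p k * ((1 - lam) * Qz k) = (1 - lam) * ∑ k, p k * Qz k := by
    rw [Finset.mul_sum]
    exact Finset.sum_congr rfl fun k _ => by ring
  -- expand the RHS of key1
  have t1 : ∑ k, p k * s = s := by
    rw [← Finset.sum_mul, hp1, one_mul]
  have t2 : ∑ k, p k * (∑ j, u j * ξ k j) = ∑ j, u j * μz j := by
    simp only [Finset.mul_sum]
    rw [Finset.sum_comm]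
    refine Finset.sum_congr rfl fun j _ => ?_
    rw [← hpμ j, Finset.mul_sum]
    exact Finset.sum_congr rfl fun k _ => by ring
  have t3 : ∑ k, p k * (∑ i, ∑ j, (ξ k i - μz i) * (ξ k j - μz j) * Y i j) = frob Sz Y := by
    simp only [Finset.mul_sum]
    rw [Finset.sum_comm]
    unfold frob
    refine Finset.sum_congr rfl fun i _ => ?_
    rw [Finset.sum_comm]
    refine Finset.sum_congr rfl fun j _ => ?_
    rw [← hpS i j, Finset.sum_mul]
    exact Finset.sum_congr rfl fun k _ => by ring
  have t4 : ∑ k, p k * (cL * pv k) = cL * ∑ k, p k * pv k := by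
    rw [Finset.mul_sum]
    exact Finset.sum_congr rfl fun k _ => by ring
  have e2 : ∑ k, p k * (s + (∑ j, u j * ξ k j) +
        (∑ i, ∑ j, (ξ k i - μz i) * (ξ k j - μz j) * Y i j) - cL * pv k)
      = s + (∑ j, u j * μz j) + frob Sz Y - cL * ∑ k, p k * pv k := by
    have e2' : ∑ k, p k * (s + (∑ j, u j * ξ k j) +
        (∑ i, ∑ j, (ξ k i - μz i) * (ξ k j - μz j) * Y i j) - cL * pv k)
        = ∑ k, (p k * s + p k * (∑ j, u j * ξ k j) +
          p k * (∑ i, ∑ j, (ξ k i - μz i) * (ξ k j - μz j) * Y i j) - p k * (cL * pv k)) :=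
      Finset.sum_congr rfl fun k _ => by ring
    rw [e2', Finset.sum_sub_distrib, Finset.sum_add_distrib, Finset.sum_add_distrib,
      t1, t2, t3, t4]
  have key2 : ∑ k, q k * Qz k ≤ ∑ k, q k * (pv k - θ) :=
    Finset.sum_le_sum fun k _ => mul_le_mul_of_nonneg_left (hc2 k) (hq01 k).1
  have e3 : ∑ k, q k * (pv k - θ) = (∑ k, q k * pv k) - lam * θ := by
    simp only [mul_sub]
    rw [Finset.sum_sub_distrib, ← Finset.sum_mul, hqsum]
  have key3 : ∑ k, q k * pv k ≤ cL * ∑ k, p k * pv k := by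
    rw [Finset.mul_sum]
    refine Finset.sum_le_sum fun k _ => ?_
    have h := mul_le_mul_of_nonneg_right (hq01 k).2 (hpv k)
    calc q k * pv k ≤ p k * cL * pv k := h
      _ = cL * (p k * pv k) := by ring
  rw [e1] at key1
  rw [e2] at key1
  rw [e3] at key2
  linarith

lemma strong_dual (K J : ℕ) (ξ : Fin K → Fin J → ℝ) (Qz : Fin K → ℝ) (μz : Fin J → ℝ)
    (Sz : Matrix (Fin J) (Fin J) ℝ) (lam alp : ℝ)
    (p₀ : Fin K → ℝ) (hp₀ : p₀ ∈ Type2Set K J ξ μz Sz)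
    (q₀ : Fin K → ℝ) (hq₀ : q₀ ∈ CVaRSet K lam alp p₀)
    (V : ℝ)
    (hub : ∀ p ∈ Type2Set K J ξ μz Sz, ∀ q ∈ CVaRSet K lam alp p,
      (1 - lam) * (∑ k, p k * Qz k) + ∑ k, q k * Qz k ≤ V)
    (ε : ℝ) (hε : 0 < ε) :
    ∃ (θ s : ℝ) (u : Fin J → ℝ) (Y : Matrix (Fin J) (Fin J) ℝ) (pv : Fin K → ℝ),
      (∀ k, 0 ≤ pv k) ∧
      (∀ k, (1 - lam) * Qz k ≤ s + (∑ j, u j * ξ k j) +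
        frob (Matrix.vecMulVec (fun j => ξ k j - μz j) (fun j => ξ k j - μz j)) Y
        - (lam / (1 - alp)) * pv k) ∧
      (∀ k, Qz k ≤ pv k - θ) ∧
      (-(lam * θ) + s + (∑ j, u j * μz j) + frob Sz Y < V + ε) := by
  classical
  set cL : ℝ := lam / (1 - alp) with hcL
  -- LP data
  set A : (Fin K ⊕ (Fin K ⊕ Fin K)) → (Unit ⊕ (Fin J ⊕ ((Fin J × Fin J) ⊕ (Unit ⊕ Fin K)))) → ℝ :=
    Sum.elim
      (fun k => Sum.elim (fun _ => (1:ℝ)) (Sum.elim (fun j => ξ k j)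
        (Sum.elim (fun ij => (ξ k ij.1 - μz ij.1) * (ξ k ij.2 - μz ij.2))
          (Sum.elim (fun _ => (0:ℝ)) (fun k' => if k' = k then cL else 0)))))
      (Sum.elim
        (fun k => Sum.elim (fun _ => (0:ℝ)) (Sum.elim (fun _ => (0:ℝ))
          (Sum.elim (fun _ => (0:ℝ))
            (Sum.elim (fun _ => (1:ℝ)) (fun k' => if k' = k then (-1:ℝ) else 0)))))
        (fun k => Sum.elim (fun _ => (0:ℝ)) (Sum.elim (fun _ => (0:ℝ))
          (Sum.elim (fun _ => (0:ℝ))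
            (Sum.elim (fun _ => (0:ℝ)) (fun k' => if k' = k then (-1:ℝ) else 0)))))) with hA
  set b : (Unit ⊕ (Fin J ⊕ ((Fin J × Fin J) ⊕ (Unit ⊕ Fin K)))) → ℝ :=
    Sum.elim (fun _ => (1:ℝ)) (Sum.elim (fun j => μz j)
      (Sum.elim (fun ij => Sz ij.1 ij.2) (Sum.elim (fun _ => lam) (fun _ => (0:ℝ))))) with hb
  set c : (Fin K ⊕ (Fin K ⊕ Fin K)) → ℝ :=
    Sum.elim (fun k => (1 - lam) * Qz k) (Sum.elim (fun k => Qz k) (fun _ => (0:ℝ))) with hc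
  -- row sums for arbitrary nonneg vector
  have hrow : ∀ (w : Fin K ⊕ (Fin K ⊕ Fin K) → ℝ)
      (r : Unit ⊕ (Fin J ⊕ ((Fin J × Fin J) ⊕ (Unit ⊕ Fin K)))),
      ∑ jc, w jc * A jc r =
        Sum.elim (fun _ : Unit => ∑ k, w (Sum.inl k))
          (Sum.elim (fun j => ∑ k, w (Sum.inl k) * ξ k j)
            (Sum.elim (fun ij => ∑ k, w (Sum.inl k) * ((ξ k ij.1 - μz ij.1) * (ξ k ij.2 - μz ij.2)))
              (Sum.elim (fun _ : Unit => ∑ k, w (Sum.inr (Sum.inl k)))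
                (fun k' => cL * w (Sum.inl k') - w (Sum.inr (Sum.inl k'))
                  - w (Sum.inr (Sum.inr k')))))) r := by
    intro w r
    rcases r with _ | r
    · simp [hA, Fintype.sum_sum_type]
    rcases r with j | r
    · simp [hA, Fintype.sum_sum_type]
    rcases r with ij | r
    · simp [hA, Fintype.sum_sum_type, mul_assoc]
    rcases r with _ | k'
    · simp [hA, Fintype.sum_sum_type]
    · simp only [hA, Fintype.sum_sum_type, Sum.elim_inl, Sum.elim_inr,
        mul_ite, mul_zero, mul_neg, mul_one, Finset.sum_ite_eq, Finset.mem_univ, if_true]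
      ring
  have hcost : ∀ (w : Fin K ⊕ (Fin K ⊕ Fin K) → ℝ),
      ∑ jc, w jc * c jc = (∑ k, w (Sum.inl k) * ((1 - lam) * Qz k))
        + ∑ k, w (Sum.inr (Sum.inl k)) * Qz k := by
    intro w
    simp [hc, Fintype.sum_sum_type]
  obtain ⟨hp00, hp01, hp0μ, hp0S⟩ := hp₀
  obtain ⟨hq001, hq0sum⟩ := hq₀
  set w₀ : Fin K ⊕ (Fin K ⊕ Fin K) → ℝ :=
    Sum.elim p₀ (Sum.elim q₀ (fun k => p₀ k * cL - q₀ k)) with hw₀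
  have hw₀0 : ∀ j, 0 ≤ w₀ j := by
    rintro (k | k | k)
    · exact hp00 k
    · exact (hq001 k).1
    · simpa [hw₀] using sub_nonneg.mpr (hq001 k).2
  have hw₀A : ∀ r, ∑ jc, w₀ jc * A jc r = b r := by
    intro r
    rw [hrow w₀]
    rcases r with _ | r
    · simpa [hw₀, hb] using hp01
    rcases r with j | r
    · simpa [hw₀, hb] using hp0μ j
    rcases r with ij | r
    · simpa [hw₀, hb] using hp0S ij.1 ij.2
    rcases r with _ | k'
    · simpa [hw₀, hb] using hq0sum
    · simp [hw₀, hb]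
      ring
  have hubLP : ∀ w : Fin K ⊕ (Fin K ⊕ Fin K) → ℝ, (∀ j, 0 ≤ w j) →
      (∀ r, ∑ jc, w jc * A jc r = b r) → ∑ jc, w jc * c jc ≤ V := by
    intro w hw0 hwA
    have hwA' : ∀ r, (Sum.elim (fun _ : Unit => ∑ k, w (Sum.inl k))
          (Sum.elim (fun j => ∑ k, w (Sum.inl k) * ξ k j)
            (Sum.elim (fun ij => ∑ k, w (Sum.inl k) * ((ξ k ij.1 - μz ij.1) * (ξ k ij.2 - μz ij.2)))
              (Sum.elim (fun _ : Unit => ∑ k, w (Sum.inr (Sum.inl k)))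
                (fun k' => cL * w (Sum.inl k') - w (Sum.inr (Sum.inl k'))
                  - w (Sum.inr (Sum.inr k'))))))) r = b r := by
      intro r
      rw [← hrow w]
      exact hwA r
    set p : Fin K → ℝ := fun k => w (Sum.inl k) with hp
    set q : Fin K → ℝ := fun k => w (Sum.inr (Sum.inl k)) with hq
    have h1 : ∑ k, p k = 1 := by simpa [hb] using hwA' (Sum.inl ())
    have hμ : ∀ j, ∑ k, p k * ξ k j = μz j := by
      intro j; simpa [hb] using hwA' (Sum.inr (Sum.inl j))
    have hS : ∀ i j, ∑ k, p k * ((ξ k i - μz i) * (ξ k j - μz j)) = Sz i j := by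
      intro i j; simpa [hb] using hwA' (Sum.inr (Sum.inr (Sum.inl (i, j))))
    have hqs : ∑ k, q k = lam := by
      simpa [hb] using hwA' (Sum.inr (Sum.inr (Sum.inr (Sum.inl ()))))
    have hslack : ∀ k, cL * p k - q k - w (Sum.inr (Sum.inr k)) = 0 := by
      intro k; simpa [hb] using hwA' (Sum.inr (Sum.inr (Sum.inr (Sum.inr k))))
    have hpmem : p ∈ Type2Set K J ξ μz Sz := ⟨fun k => hw0 (Sum.inl k), h1, hμ, hS⟩
    have hqmem : q ∈ CVaRSet K lam alp p := by
      refine ⟨fun k => ⟨hw0 (Sum.inr (Sum.inl k)), ?_⟩, hqs⟩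
      have h := hslack k
      have h2 := hw0 (Sum.inr (Sum.inr k))
      rw [← hcL]
      nlinarith
    have := hub p hpmem q hqmem
    rw [hcost w]
    have e1 : ∑ k, p k * ((1 - lam) * Qz k) = (1 - lam) * ∑ k, p k * Qz k := by
      rw [Finset.mul_sum]; exact Finset.sum_congr rfl fun k _ => by ring
    calc (∑ k, w (Sum.inl k) * ((1 - lam) * Qz k)) + ∑ k, w (Sum.inr (Sum.inl k)) * Qz k
        = (1 - lam) * (∑ k, p k * Qz k) + ∑ k, q k * Qz k := by rw [← e1]
      _ ≤ V := this
  obtain ⟨y, hyfeas, hyobj⟩ := lp_duality A b c w₀ hw₀0 hw₀A V hubLP ε hε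
  -- extract dual variables
  refine ⟨-y (Sum.inr (Sum.inr (Sum.inr (Sum.inl ())))), y (Sum.inl ()),
    fun j => y (Sum.inr (Sum.inl j)),
    Matrix.of (fun i j => y (Sum.inr (Sum.inr (Sum.inl (i, j))))),
    fun k => -y (Sum.inr (Sum.inr (Sum.inr (Sum.inr k)))), ?_, ?_, ?_, ?_⟩
  · intro k
    have h := hyfeas (Sum.inr (Sum.inr k))
    simp only [hc, hA, Sum.elim_inl, Sum.elim_inr, Fintype.sum_sum_type,
      zero_mul, ite_mul, neg_mul, one_mul, Finset.sum_ite_eq', Finset.mem_univ, if_true,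
      Finset.sum_const_zero, add_zero, zero_add, Fintype.sum_unique, PUnit.default_eq_unit] at h
    beta_reduce
    linarith
  · intro k
    have h := hyfeas (Sum.inl k)
    simp only [hc, hA, Sum.elim_inl, Sum.elim_inr, Fintype.sum_sum_type,
      zero_mul, ite_mul, one_mul, Finset.sum_ite_eq', Finset.mem_univ, if_true,
      Finset.sum_const_zero, add_zero, zero_add] at h
    have e1 : ∑ j, ξ k j * y (Sum.inr (Sum.inl j)) = ∑ j, y (Sum.inr (Sum.inl j)) * ξ k j :=
      Finset.sum_congr rfl fun j _ => mul_comm _ _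
    have e2 : ∑ ij : Fin J × Fin J, (ξ k ij.1 - μz ij.1) * (ξ k ij.2 - μz ij.2)
          * y (Sum.inr (Sum.inr (Sum.inl ij)))
        = frob (Matrix.vecMulVec (fun j => ξ k j - μz j) (fun j => ξ k j - μz j))
          (Matrix.of (fun i j => y (Sum.inr (Sum.inr (Sum.inl (i, j)))))) := by
      rw [Fintype.sum_prod_type]
      unfold frob
      exact Finset.sum_congr rfl fun i _ => Finset.sum_congr rfl fun j _ => by
        rw [Matrix.vecMulVec_apply, Matrix.of_apply]
    rw [e1, e2] at h
    simp only [Fintype.sum_unique, PUnit.default_eq_unit] at h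
    beta_reduce
    linarith
  · intro k
    have h := hyfeas (Sum.inr (Sum.inl k))
    simp only [hc, hA, Sum.elim_inl, Sum.elim_inr, Fintype.sum_sum_type,
      zero_mul, ite_mul, neg_mul, one_mul, Finset.sum_ite_eq', Finset.mem_univ, if_true,
      Finset.sum_const_zero, add_zero, zero_add, Fintype.sum_unique, PUnit.default_eq_unit] at h
    beta_reduce
    linarith
  · have h := hyobj
    simp only [hb, Sum.elim_inl, Sum.elim_inr, Fintype.sum_sum_type,
      zero_mul, one_mul, Finset.sum_const_zero, add_zero, zero_add] at h
    simp only [Fintype.sum_unique] at h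
    have e1 : ∑ j, μz j * y (Sum.inr (Sum.inl j)) = ∑ j, y (Sum.inr (Sum.inl j)) * μz j :=
      Finset.sum_congr rfl fun j _ => mul_comm _ _
    have e2 : ∑ ij : Fin J × Fin J, Sz ij.1 ij.2 * y (Sum.inr (Sum.inr (Sum.inl ij)))
        = frob Sz (Matrix.of (fun i j => y (Sum.inr (Sum.inr (Sum.inl (i, j)))))) := by
      rw [Fintype.sum_prod_type]
      unfold frob
      exact Finset.sum_congr rfl fun i _ => Finset.sum_congr rfl fun j _ => rfl
    rw [e1, e2] at h
    linarith


lemma sInf_eq_of_approx (A B : Set ℝ) (hA : A.Nonempty)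
    (h1 : ∀ a ∈ A, ∀ ε : ℝ, 0 < ε → ∃ b ∈ B, b ≤ a + ε)
    (h2 : ∀ b ∈ B, ∃ a ∈ A, a ≤ b) : sInf A = sInf B := by
  have hB : B.Nonempty := by
    obtain ⟨a, ha⟩ := hA
    obtain ⟨b, hb, -⟩ := h1 a ha 1 one_pos
    exact ⟨b, hb⟩
  have hlb : lowerBounds A = lowerBounds B := by
    apply Set.Subset.antisymm
    · intro x hx b hb
      obtain ⟨a, ha, hab⟩ := h2 b hb
      exact (hx ha).trans hab
    · intro x hx a ha
      refine le_of_forall_pos_le_add fun ε hε => ?_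
      obtain ⟨b, hb, hba⟩ := h1 a ha ε hε
      exact (hx hb).trans hba
  by_cases hbdd : BddBelow A
  · have hbddB : BddBelow B := by unfold BddBelow Set.Nonempty; rw [← hlb]; exact hbdd
    have g1 := isGLB_csInf hA hbdd
    have g2 := isGLB_csInf hB hbddB
    exact le_antisymm (g2.2 (hlb ▸ g1.1)) (g1.2 (hlb.symm ▸ g2.1))
  · have hbddB : ¬ BddBelow B := fun h => hbdd (by unfold BddBelow Set.Nonempty; rw [hlb]; exact h)
    rw [Real.sInf_of_not_bddBelow hbdd, Real.sInf_of_not_bddBelow hbddB]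


theorem stmt9 (I d K J : ℕ) (hI : 0 < I) (hd : 0 < d) (hK : 0 < K) (hJ : 0 < J)
    (X : Set ((Fin I → ℝ) × (Fin d → ℝ))) (hXne : X.Nonempty)
    (hXbin : ∀ z ∈ X, ∀ i, z.1 i = 0 ∨ z.1 i = 1)
    (g : (Fin I → ℝ) × (Fin d → ℝ) → ℝ)
    (Q : (Fin I → ℝ) → Fin K → ℝ)
    (lam alp : ℝ) (hlam0 : 0 ≤ lam) (hlam1 : lam ≤ 1) (halp0 : 0 < alp) (halp1 : alp < 1)
    (ξ : Fin K → Fin J → ℝ)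
    (μ : (Fin I → ℝ) → Fin J → ℝ)
    (S : (Fin I → ℝ) → Matrix (Fin J) (Fin J) ℝ)
    (hne : ∀ x : Fin I → ℝ, (∃ y, (x, y) ∈ X) →
      ∃ p ∈ Type2Set K J ξ (μ x) (S x), (CVaRSet K lam alp p).Nonempty) :
    sInf {v : ℝ | ∃ z ∈ X,
        v = g z + sSup {r : ℝ | ∃ p ∈ Type2Set K J ξ (μ z.1) (S z.1),
          ∃ q ∈ CVaRSet K lam alp p,
          r = (1 - lam) * (∑ k, p k * Q z.1 k) + ∑ k, q k * Q z.1 k}} =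
    sInf {v : ℝ | ∃ z ∈ X, ∃ θ s : ℝ, ∃ u : Fin J → ℝ, ∃ Y : Matrix (Fin J) (Fin J) ℝ,
        ∃ pv : Fin K → ℝ,
        (∀ k, 0 ≤ pv k) ∧
        (∀ k, (1 - lam) * Q z.1 k ≤ s + (∑ j, u j * ξ k j) +
          frob (Matrix.vecMulVec (fun j => ξ k j - μ z.1 j) (fun j => ξ k j - μ z.1 j)) Y
          - (lam / (1 - alp)) * pv k) ∧
        (∀ k, Q z.1 k ≤ pv k - θ) ∧
        v = g z - lam * θ + s + (∑ j, u j * μ z.1 j) + frob (S z.1) Y} := by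
  have hcL0 : 0 ≤ lam / (1 - alp) := div_nonneg hlam0 (by linarith)
  -- inner value set for a given z
  set inn : ((Fin I → ℝ) × (Fin d → ℝ)) → Set ℝ := fun z =>
    {r : ℝ | ∃ p ∈ Type2Set K J ξ (μ z.1) (S z.1),
      ∃ q ∈ CVaRSet K lam alp p,
      r = (1 - lam) * (∑ k, p k * Q z.1 k) + ∑ k, q k * Q z.1 k} with hinn
  have hfeas : ∀ z ∈ X, ∃ p ∈ Type2Set K J ξ (μ z.1) (S z.1),
      ∃ q, q ∈ CVaRSet K lam alp p := by
    intro z hz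
    obtain ⟨p₀, hp₀, q₀, hq₀⟩ := hne z.1 ⟨z.2, by simpa using hz⟩
    exact ⟨p₀, hp₀, q₀, hq₀⟩
  have hinne : ∀ z ∈ X, (inn z).Nonempty := by
    intro z hz
    obtain ⟨p₀, hp₀, q₀, hq₀⟩ := hfeas z hz
    exact ⟨_, p₀, hp₀, q₀, hq₀, rfl⟩
  have hbddab : ∀ z ∈ X, BddAbove (inn z) := by
    intro z hz
    refine ⟨(1 - lam) * (∑ k, |Q z.1 k|) + (lam / (1 - alp)) * (∑ k, |Q z.1 k|), ?_⟩
    rintro r ⟨p, ⟨hp0, hp1, -, -⟩, q, ⟨hq01, -⟩, rfl⟩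
    have hple : ∀ k, p k ≤ 1 := by
      intro k
      calc p k ≤ ∑ k', p k' := Finset.single_le_sum (fun k' _ => hp0 k') (Finset.mem_univ k)
        _ = 1 := hp1
    have h1 : ∑ k, p k * Q z.1 k ≤ ∑ k, |Q z.1 k| := by
      refine Finset.sum_le_sum fun k _ => ?_
      calc p k * Q z.1 k ≤ p k * |Q z.1 k| :=
            mul_le_mul_of_nonneg_left (le_abs_self _) (hp0 k)
        _ ≤ 1 * |Q z.1 k| := mul_le_mul_of_nonneg_right (hple k) (abs_nonneg _)
        _ = |Q z.1 k| := one_mul _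
    have h2 : ∑ k, q k * Q z.1 k ≤ (lam / (1 - alp)) * ∑ k, |Q z.1 k| := by
      rw [Finset.mul_sum]
      refine Finset.sum_le_sum fun k _ => ?_
      have hqk : q k ≤ lam / (1 - alp) := by
        calc q k ≤ p k * (lam / (1 - alp)) := (hq01 k).2
          _ ≤ 1 * (lam / (1 - alp)) := mul_le_mul_of_nonneg_right (hple k) hcL0
          _ = lam / (1 - alp) := one_mul _
      calc q k * Q z.1 k ≤ q k * |Q z.1 k| :=
            mul_le_mul_of_nonneg_left (le_abs_self _) (hq01 k).1
        _ ≤ (lam / (1 - alp)) * |Q z.1 k| :=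
            mul_le_mul_of_nonneg_right hqk (abs_nonneg _)
    have h3 : (1 - lam) * (∑ k, p k * Q z.1 k) ≤ (1 - lam) * ∑ k, |Q z.1 k| :=
      mul_le_mul_of_nonneg_left h1 (by linarith)
    linarith
  apply sInf_eq_of_approx
  · obtain ⟨z₀, hz₀⟩ := hXne
    exact ⟨_, z₀, hz₀, rfl⟩
  · -- strong duality direction
    rintro a ⟨z, hz, rfl⟩ ε hε
    obtain ⟨p₀, hp₀, q₀, hq₀⟩ := hfeas z hz
    have hub : ∀ p ∈ Type2Set K J ξ (μ z.1) (S z.1), ∀ q ∈ CVaRSet K lam alp p,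
        (1 - lam) * (∑ k, p k * Q z.1 k) + ∑ k, q k * Q z.1 k ≤ sSup (inn z) := by
      intro p hp q hq
      exact le_csSup (hbddab z hz) ⟨p, hp, q, hq, rfl⟩
    obtain ⟨θ, s, u, Y, pv, hpv, hc1, hc2, hobj⟩ :=
      strong_dual K J ξ (Q z.1) (μ z.1) (S z.1) lam alp p₀ hp₀ q₀ hq₀
        (sSup (inn z)) hub ε hε
    refine ⟨g z - lam * θ + s + (∑ j, u j * μ z.1 j) + frob (S z.1) Y,
      ⟨z, hz, θ, s, u, Y, pv, hpv, hc1, hc2, rfl⟩, ?_⟩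
    have : sSup (inn z) = sSup {r : ℝ | ∃ p ∈ Type2Set K J ξ (μ z.1) (S z.1),
        ∃ q ∈ CVaRSet K lam alp p,
        r = (1 - lam) * (∑ k, p k * Q z.1 k) + ∑ k, q k * Q z.1 k} := rfl
    rw [← this]
    linarith
  · -- weak duality direction
    rintro b ⟨z, hz, θ, s, u, Y, pv, hpv, hc1, hc2, rfl⟩
    refine ⟨g z + sSup (inn z), ⟨z, hz, rfl⟩, ?_⟩
    have hle : sSup (inn z) ≤ -(lam * θ) + s + (∑ j, u j * μ z.1 j) + frob (S z.1) Y := by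
      refine csSup_le (hinne z hz) ?_
      rintro r ⟨p, hp, q, hq, rfl⟩
      exact weak_dual K J ξ (Q z.1) (μ z.1) (S z.1) lam alp θ s u Y pv hpv hc1 hc2 p hp q hq
    linarith
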